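/- arXiv:2001.10965 — 2 statements merged into one kernel-verified Lean document; each statement's English description precedes it below -/
import Mathlib

section
/- Let K be a positive-definite kernel on Ω ⊆ ℝ^d with reproducing kernel Hilbert space H_K(Ω), and let (X_N)_{N=1}^∞ ⊂ Ω be a sequence of point sets, X_N containing N distinct points. If f ∈ H_K(Ω), then σ_ML(f,X_N) ≤ N^{−1/2} ‖f‖_{H_K(Ω)} for every N. If, in addition, there exists a point x* ∈ Ω such that f(x*) ≠ 0 and x* ∈ X_N for all sufficiently large N, then σ_ML(f,X_N) ≍ N^{−1/2}, i.e. there exist constants c, C > 0 such that c N^{−1/2} ≤ σ_ML(f,X_N) ≤ C N^{−1/2} for all sufficiently large N. -/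
open MeasureTheory Filter Matrix Real Function
open scoped BigOperators RealInnerProductSpace FourierTransform Topology NNReal

noncomputable section

/-- Euclidean space `ℝ^d`. -/
abbrev Euc (d : ℕ) := EuclideanSpace ℝ (Fin d)

variable {d : ℕ}

/-- The kernel matrix `(K_X)_{ij} = K(x_i, x_j)`. -/
def kernelMatrix (K : Euc d → Euc d → ℝ) {N : ℕ} (x : Fin N → Euc d) :
    Matrix (Fin N) (Fin N) ℝ :=
  Matrix.of fun i j => K (x i) (x j)

/-- A positive-definite kernel on `Ω`: every kernel matrix built from finitely many
distinct points of `Ω` is positive-definite. -/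
def IsPosDefKernel (Ω : Set (Euc d)) (K : Euc d → Euc d → ℝ) : Prop :=
  ∀ (N : ℕ) (x : Fin N → Euc d), Function.Injective x → (∀ i, x i ∈ Ω) → 0 < N →
    (kernelMatrix K x).PosDef

/-- The vector `(k_X(t))_i = K(t, x_i)`. -/
def kvec (K : Euc d → Euc d → ℝ) {N : ℕ} (x : Fin N → Euc d) (t : Euc d) : Fin N → ℝ :=
  fun i => K t (x i)

/-- The data vector `(f_X)_i = f(x_i)`. -/
def fvec (f : Euc d → ℝ) {N : ℕ} (x : Fin N → Euc d) : Fin N → ℝ := fun i => f (x i)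

/-- The GP conditional mean `s_{f,X}(t) = k_X(t)ᵀ K_X⁻¹ f_X`. -/
def condMean (K : Euc d → Euc d → ℝ) {N : ℕ} (x : Fin N → Euc d) (f : Euc d → ℝ)
    (t : Euc d) : ℝ :=
  kvec K x t ⬝ᵥ ((kernelMatrix K x)⁻¹ *ᵥ fvec f x)

/-- The GP conditional covariance `P_X(s,t) = K(s,t) - k_X(s)ᵀ K_X⁻¹ k_X(t)`. -/
def condCov (K : Euc d → Euc d → ℝ) {N : ℕ} (x : Fin N → Euc d) (s t : Euc d) : ℝ :=
  K s t - kvec K x s ⬝ᵥ ((kernelMatrix K x)⁻¹ *ᵥ kvec K x t)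

/-- The quadratic form `f_Xᵀ K_X⁻¹ f_X`. -/
def quadForm (K : Euc d → Euc d → ℝ) (f : Euc d → ℝ) {N : ℕ} (x : Fin N → Euc d) : ℝ :=
  fvec f x ⬝ᵥ ((kernelMatrix K x)⁻¹ *ᵥ fvec f x)

/-- The maximum likelihood estimate `σ_ML(f,X) = √(f_Xᵀ K_X⁻¹ f_X / N)`. -/
def sigmaML (K : Euc d → Euc d → ℝ) (f : Euc d → ℝ) {N : ℕ} (x : Fin N → Euc d) : ℝ :=
  Real.sqrt (quadForm K f x / N)

/-- The integral `I(f) = ∫_Ω f(t) w(t) dt`. -/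
def intF (Ω : Set (Euc d)) (w f : Euc d → ℝ) : ℝ := ∫ t in Ω, f t * w t

/-- The Bayesian cubature estimate `Q_X(f) = ∫_Ω s_{f,X}(t) w(t) dt`. -/
def quadQ (Ω : Set (Euc d)) (w : Euc d → ℝ) (K : Euc d → Euc d → ℝ) {N : ℕ}
    (x : Fin N → Euc d) (f : Euc d → ℝ) : ℝ := ∫ t in Ω, condMean K x f t * w t

/-- The Bayesian cubature variance `V_X = ∫_Ω ∫_Ω P_X(s,t) w(s) w(t) ds dt`. -/
def quadV (Ω : Set (Euc d)) (w : Euc d → ℝ) (K : Euc d → Euc d → ℝ) {N : ℕ}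
    (x : Fin N → Euc d) : ℝ := ∫ s in Ω, ∫ t in Ω, condCov K x s t * w s * w t

/-- Credible-set width `R_GP(t,f,X) = σ_ML(f,X) P_X(t,t)^{1/2}`. -/
def RGP (K : Euc d → Euc d → ℝ) (f : Euc d → ℝ) {N : ℕ} (x : Fin N → Euc d)
    (t : Euc d) : ℝ :=
  sigmaML K f x * Real.sqrt (condCov K x t t)

/-- Credible-set width `R_BC(f,X) = σ_ML(f,X) V_X^{1/2}`. -/
def RBC (Ω : Set (Euc d)) (w : Euc d → ℝ) (K : Euc d → Euc d → ℝ) (f : Euc d → ℝ)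
    {N : ℕ} (x : Fin N → Euc d) : ℝ :=
  sigmaML K f x * Real.sqrt (quadV Ω w K x)

/-- Standard score `|err|/R`, with the convention that it equals `1` when `R = 0`. -/
def score (err R : ℝ) : ℝ := if R = 0 then 1 else |err| / R

/-- A positive, bounded, measurable weight function on `Ω`. -/
def IsWeight (Ω : Set (Euc d)) (w : Euc d → ℝ) : Prop :=
  Measurable w ∧ (∀ t ∈ Ω, 0 < w t) ∧ ∃ B, ∀ t ∈ Ω, w t ≤ B

/-- Fill-distance `h_X = sup_{t ∈ Ω} min_i ‖t - x_i‖`. -/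
def fillDist (Ω : Set (Euc d)) {N : ℕ} (x : Fin N → Euc d) : ℝ :=
  ⨆ t : Ω, ⨅ i, dist (t : Euc d) (x i)

/-- Separation radius `q_X = (1/2) min_{i ≠ j} ‖x_i - x_j‖`. -/
def sepRad {N : ℕ} (x : Fin N → Euc d) : ℝ :=
  (1 / 2) * ⨅ p : { p : Fin N × Fin N // p.1 ≠ p.2 }, dist (x p.val.1) (x p.val.2)

/-- Mesh ratio `ρ_X = h_X / q_X`. -/
def meshRatio (Ω : Set (Euc d)) {N : ℕ} (x : Fin N → Euc d) : ℝ :=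
  fillDist Ω x / sepRad x

/-- A quasi-uniform sequence of point sets in `Ω`, `X_N` containing `N` distinct points:
the mesh ratios `ρ_{X_N}` are bounded. -/
def QuasiUniform (Ω : Set (Euc d)) (x : (N : ℕ) → Fin N → Euc d) : Prop :=
  (∀ N, Function.Injective (x N)) ∧ (∀ N i, x N i ∈ Ω) ∧
    ∃ C : ℝ, ∀ N, meshRatio Ω (x N) ≤ C

/-- Fourier transform of a real-valued function on `ℝ^d`. -/
def fourierT (g : Euc d → ℝ) : Euc d → ℂ := 𝓕 (fun t => (g t : ℂ))

/-- The integrand `(1+‖ξ‖²)^α |ĝ(ξ)|²` defining the Sobolev norm. -/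
def sobIntegrand (α : ℝ) (g : Euc d → ℝ) (ξ : Euc d) : ℝ :=
  (1 + ‖ξ‖ ^ 2) ^ α * ‖fourierT g ξ‖ ^ 2

/-- Membership in the Sobolev space `W₂^α(ℝ^d)`. -/
def MemSobolev (α : ℝ) (g : Euc d → ℝ) : Prop :=
  MemLp g 2 (volume : Measure (Euc d)) ∧ Integrable (sobIntegrand α g)

/-- The Sobolev norm `‖g‖_{W₂^α(ℝ^d)} = (∫ (1+‖ξ‖²)^α |ĝ(ξ)|² dξ)^{1/2}`. -/
def sobNorm (α : ℝ) (g : Euc d → ℝ) : ℝ := Real.sqrt (∫ ξ, sobIntegrand α g ξ)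

/-- Membership in `W₂^α(Ω)`: existence of an extension in `W₂^α(ℝ^d)`. -/
def MemSobolevOn (Ω : Set (Euc d)) (α : ℝ) (g : Euc d → ℝ) : Prop :=
  ∃ g₀ : Euc d → ℝ, MemSobolev α g₀ ∧ Set.EqOn g₀ g Ω

/-- The norm of `W₂^α(Ω)`: infimum of `‖g₀‖_{W₂^α(ℝ^d)}` over extensions `g₀` of `g`. -/
def sobNormOn (Ω : Set (Euc d)) (α : ℝ) (g : Euc d → ℝ) : ℝ :=
  sInf (sobNorm α '' { g₀ : Euc d → ℝ | MemSobolev α g₀ ∧ Set.EqOn g₀ g Ω })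

/-- `S_-^β(ℝ^d)`: square-integrable `g` with `|ĝ(ξ)|² ≲ (1+‖ξ‖²)^{-(β+d/2)}`
for all sufficiently large `‖ξ‖`. -/
def MemSminus (β : ℝ) (g : Euc d → ℝ) : Prop :=
  MemLp g 2 (volume : Measure (Euc d)) ∧
    ∃ C R : ℝ, 0 < C ∧ ∀ ξ : Euc d, R ≤ ‖ξ‖ →
      ‖fourierT g ξ‖ ^ 2 ≤ C * (1 + ‖ξ‖ ^ 2) ^ (-(β + (d : ℝ) / 2))

/-- `S_+^β(ℝ^d)`: square-integrable `g` with `|ĝ(ξ)|² ≳ (1+‖ξ‖²)^{-(β+d/2)}`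
for all sufficiently large `‖ξ‖`. -/
def MemSplus (β : ℝ) (g : Euc d → ℝ) : Prop :=
  MemLp g 2 (volume : Measure (Euc d)) ∧
    ∃ c R : ℝ, 0 < c ∧ ∀ ξ : Euc d, R ≤ ‖ξ‖ →
      c * (1 + ‖ξ‖ ^ 2) ^ (-(β + (d : ℝ) / 2)) ≤ ‖fourierT g ξ‖ ^ 2

/-- `S^β(ℝ^d) = S_-^β(ℝ^d) ∩ S_+^β(ℝ^d)`. -/
def MemS (β : ℝ) (g : Euc d → ℝ) : Prop := MemSminus β g ∧ MemSplus β g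

/-- Membership in `S_-^β(Ω)`: existence of an extension in `S_-^β(ℝ^d)`. -/
def MemSminusOn (Ω : Set (Euc d)) (β : ℝ) (g : Euc d → ℝ) : Prop :=
  ∃ g₀ : Euc d → ℝ, MemSminus β g₀ ∧ Set.EqOn g₀ g Ω

/-- Interior cone condition for `Ω`. -/
def HasInteriorConeCondition (Ω : Set (Euc d)) : Prop :=
  ∃ θ r : ℝ, 0 < θ ∧ θ < π / 2 ∧ 0 < r ∧
    ∀ x ∈ Ω, ∃ ξ : Euc d, ‖ξ‖ = 1 ∧
      ∀ (y : Euc d) (lam : ℝ), ‖y‖ = 1 → Real.cos θ ≤ ⟪y, ξ⟫ →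
        lam ∈ Set.Icc 0 r → x + lam • y ∈ Ω

/-- Lipschitz boundary: near each boundary point, `Ω` is the subgraph of a Lipschitz
function over a hyperplane. -/
def HasLipschitzBoundary (Ω : Set (Euc d)) : Prop :=
  ∀ p ∈ frontier Ω, ∃ ν : Euc d, ‖ν‖ = 1 ∧
    ∃ (φ : Euc d → ℝ) (L : ℝ≥0), LipschitzWith L φ ∧
      ∃ ε > (0 : ℝ), ∀ z ∈ Metric.ball p ε,
        (z ∈ Ω ↔ ⟪z, ν⟫ < φ (z - ⟪z, ν⟫ • ν))

/-- Assumption 2.1 of the paper: `Ω` is bounded and connected, has non-empty interior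
and a Lipschitz boundary, and satisfies an interior cone condition. -/
structure DomainAssumption (Ω : Set (Euc d)) : Prop where
  bounded : Bornology.IsBounded Ω
  connected : IsConnected Ω
  interior_nonempty : (interior Ω).Nonempty
  lipschitz : HasLipschitzBoundary Ω
  cone : HasInteriorConeCondition Ω

/-- `K` is a Sobolev kernel of order `α` on `Ω`: it is a positive-definite kernel whose
reproducing kernel Hilbert space equals `W₂^α(Ω)` as a set, with equivalent norms. The
RKHS is encoded by a real Hilbert space `H` together with a feature map `Kf` whose inner
products reproduce the kernel, such that elements of `H` are determined by the functions
`t ↦ ⟪g, Kf t⟫` they induce on `Ω`. -/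
def IsSobolevKernel (Ω : Set (Euc d)) (K : Euc d → Euc d → ℝ) (α : ℝ) : Prop :=
  IsPosDefKernel Ω K ∧
  ∃ (H : Type) (i₁ : NormedAddCommGroup H) (i₂ : @InnerProductSpace ℝ H _ i₁.toSeminormedAddCommGroup)
      (Kf : Euc d → H),
    (∀ x ∈ Ω, ∀ y ∈ Ω, @inner ℝ H i₂.toInner (Kf x) (Kf y) = K x y) ∧
    (∀ g : H, (∀ t ∈ Ω, @inner ℝ H i₂.toInner g (Kf t) = 0) → g = 0) ∧
    (∀ g : H, MemSobolevOn Ω α (fun t => @inner ℝ H i₂.toInner g (Kf t))) ∧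
    (∀ f : Euc d → ℝ, MemSobolevOn Ω α f →
      ∃ g : H, ∀ t ∈ Ω, @inner ℝ H i₂.toInner g (Kf t) = f t) ∧
    ∃ cK CK : ℝ, 0 < cK ∧ 0 < CK ∧ ∀ g : H,
      cK * sobNormOn Ω α (fun t => @inner ℝ H i₂.toInner g (Kf t)) ≤ @norm H i₁.toNorm g ∧
      @norm H i₁.toNorm g ≤ CK * sobNormOn Ω α (fun t => @inner ℝ H i₂.toInner g (Kf t))

end

/-! For data points `x_i` with feature vectors `u_i = Kf x_i`, the kernel matrix `K_X` is the
Gram matrix of the `u_i`, and `f_Xᵀ K_X⁻¹ f_X = ‖g‖²` for `g = ∑ (K_X⁻¹ f_X)_i u_i`, the unique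
element of `span {u_i}` with `⟪g, u_i⟫ = f(x_i)`. If `f = ⟪F, Kf ·⟫` on `Ω`, then `g` is the
orthogonal projection of `F` onto that span, so `‖g‖ ≤ ‖F‖`; and if `x_j = x*`, Cauchy–Schwarz
gives `|f(x*)| = |⟪g, Kf x*⟫| ≤ ‖Kf x*‖ ‖g‖`. Thus `(f_Xᵀ K_X⁻¹ f_X)^{1/2}` is squeezed between
two positive constants, and `σ_ML(f, X_N) = N^{-1/2} (f_Xᵀ K_X⁻¹ f_X)^{1/2}`. -/

namespace Matrix

variable {E ι : Type*} [NormedAddCommGroup E] [InnerProductSpace ℝ E] [Fintype ι] [DecidableEq ι]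

noncomputable def gramInterpolant (u : ι → E) (v : ι → ℝ) : E :=
  ∑ i, ((gram ℝ u)⁻¹ *ᵥ v) i • u i

variable {u : ι → E}

theorem inner_gramInterpolant_right (w : E) (v : ι → ℝ) :
    ⟪w, gramInterpolant u v⟫ = ∑ i, ((gram ℝ u)⁻¹ *ᵥ v) i * ⟪w, u i⟫ := by
  simp only [gramInterpolant, inner_sum, real_inner_smul_right]

variable (hu : IsUnit (gram ℝ u).det)
include hu

theorem inner_gramInterpolant (v : ι → ℝ) (j : ι) : ⟪gramInterpolant u v, u j⟫ = v j := by
  have hsolve : gram ℝ u *ᵥ ((gram ℝ u)⁻¹ *ᵥ v) = v := by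
    rw [mulVec_mulVec, mul_nonsing_inv _ hu, one_mulVec]
  conv_rhs => rw [← hsolve]
  simp only [gramInterpolant, sum_inner, real_inner_smul_left, mulVec, dotProduct, gram_apply]
  exact Finset.sum_congr rfl fun i _ => by rw [real_inner_comm, mul_comm]

theorem norm_sq_gramInterpolant (v : ι → ℝ) :
    ‖gramInterpolant u v‖ ^ 2 = v ⬝ᵥ ((gram ℝ u)⁻¹ *ᵥ v) := by
  rw [← real_inner_self_eq_norm_sq, inner_gramInterpolant_right]
  simp only [inner_gramInterpolant hu, dotProduct]
  exact Finset.sum_congr rfl fun i _ => mul_comm _ _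

theorem inner_sub_gramInterpolant_inner_eq_zero (F : E) (v : ι → ℝ) :
    ⟪F - gramInterpolant u (fun i => ⟪F, u i⟫), gramInterpolant u v⟫ = 0 := by
  simp only [inner_gramInterpolant_right, inner_sub_left, inner_gramInterpolant hu, sub_self]

theorem norm_gramInterpolant_inner_le (F : E) :
    ‖gramInterpolant u (fun i => ⟪F, u i⟫)‖ ≤ ‖F‖ := by
  have hpyth := norm_add_sq_eq_norm_sq_add_norm_sq_real
    (inner_sub_gramInterpolant_inner_eq_zero hu F fun i => ⟪F, u i⟫)
  rw [sub_add_cancel] at hpyth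
  rw [mul_self_le_mul_self_iff (norm_nonneg _) (norm_nonneg _), hpyth]
  exact le_add_of_nonneg_left (mul_self_nonneg _)

theorem abs_le_norm_mul_norm_gramInterpolant (v : ι → ℝ) (j : ι) :
    |v j| ≤ ‖u j‖ * ‖gramInterpolant u v‖ := by
  rw [← inner_gramInterpolant hu v j, mul_comm]
  exact abs_real_inner_le_norm _ _

end Matrix

section KernelMatrix

open Matrix

variable {d N : ℕ} {Ω : Set (Euc d)} {K : Euc d → Euc d → ℝ} {x : Fin N → Euc d}

theorem kernelMatrix_eq_gram {H : Type*} [NormedAddCommGroup H] [InnerProductSpace ℝ H]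
    {Kf : Euc d → H} (hKf : ∀ x ∈ Ω, ∀ y ∈ Ω, ⟪Kf x, Kf y⟫ = K x y) (hx : ∀ i, x i ∈ Ω) :
    kernelMatrix K x = gram ℝ (Kf ∘ x) := by
  ext i j
  exact (hKf _ (hx i) _ (hx j)).symm

theorem IsPosDefKernel.isUnit_det_kernelMatrix (hK : IsPosDefKernel Ω K)
    (hinj : Injective x) (hx : ∀ i, x i ∈ Ω) : IsUnit (kernelMatrix K x).det := by
  rcases N.eq_zero_or_pos with rfl | hN
  · simp
  · exact (hK N x hinj hx hN).det_pos.ne'.isUnit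

theorem sigmaML_eq_rpow_mul_sqrt_quadForm (f : Euc d → ℝ) :
    sigmaML K f x = (N : ℝ) ^ (-(1 / 2 : ℝ)) * √(quadForm K f x) := by
  rw [sigmaML, Real.sqrt_div' _ N.cast_nonneg, Real.rpow_neg N.cast_nonneg, ← Real.sqrt_eq_rpow,
    div_eq_inv_mul]

variable {H : Type*} [NormedAddCommGroup H] [InnerProductSpace ℝ H] {Kf : Euc d → H}
  (hK : IsPosDefKernel Ω K) (hKf : ∀ x ∈ Ω, ∀ y ∈ Ω, ⟪Kf x, Kf y⟫ = K x y)
  (hinj : Injective x) (hx : ∀ i, x i ∈ Ω)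
include hK hKf hinj hx

theorem isUnit_det_gram_comp : IsUnit (gram ℝ (Kf ∘ x)).det :=
  kernelMatrix_eq_gram hKf hx ▸ hK.isUnit_det_kernelMatrix hinj hx

theorem sqrt_quadForm_eq_norm_gramInterpolant (f : Euc d → ℝ) :
    √(quadForm K f x) = ‖gramInterpolant (Kf ∘ x) (fvec f x)‖ := by
  rw [quadForm, kernelMatrix_eq_gram hKf hx,
    ← norm_sq_gramInterpolant (isUnit_det_gram_comp hK hKf hinj hx),
    Real.sqrt_sq (norm_nonneg _)]

theorem sqrt_quadForm_le_norm {f : Euc d → ℝ} {F : H} (hF : ∀ t ∈ Ω, ⟪F, Kf t⟫ = f t) :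
    √(quadForm K f x) ≤ ‖F‖ := by
  have hfvec : fvec f x = fun i => ⟪F, (Kf ∘ x) i⟫ := funext fun i => (hF _ (hx i)).symm
  rw [sqrt_quadForm_eq_norm_gramInterpolant hK hKf hinj hx, hfvec]
  exact norm_gramInterpolant_inner_le (isUnit_det_gram_comp hK hKf hinj hx) F

theorem abs_le_norm_mul_sqrt_quadForm (f : Euc d → ℝ) (j : Fin N) :
    |f (x j)| ≤ ‖Kf (x j)‖ * √(quadForm K f x) := by
  rw [sqrt_quadForm_eq_norm_gramInterpolant hK hKf hinj hx]
  exact abs_le_norm_mul_norm_gramInterpolant (isUnit_det_gram_comp hK hKf hinj hx) (fvec f x) j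

end KernelMatrix

theorem sigmaML_asymp_rkhs_general {d : ℕ} (Ω : Set (Euc d)) (K : Euc d → Euc d → ℝ)
    (hK : IsPosDefKernel Ω K)
    {H : Type*} [NormedAddCommGroup H] [InnerProductSpace ℝ H] (Kf : Euc d → H)
    (hKf : ∀ x ∈ Ω, ∀ y ∈ Ω, ⟪Kf x, Kf y⟫ = K x y)
    (x : (N : ℕ) → Fin N → Euc d)
    (hx : ∀ N, Function.Injective (x N)) (hxΩ : ∀ N i, x N i ∈ Ω)
    (f : Euc d → ℝ) (F : H) (hF : ∀ t ∈ Ω, ⟪F, Kf t⟫ = f t) :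
    (∀ N : ℕ, sigmaML K f (x N) ≤ (N : ℝ) ^ (-(1 / 2 : ℝ)) * ‖F‖) ∧
      ((∃ xstar ∈ Ω, f xstar ≠ 0 ∧ ∀ᶠ N : ℕ in atTop, ∃ i, x N i = xstar) →
        ∃ c C : ℝ, 0 < c ∧ 0 < C ∧ ∀ᶠ N : ℕ in atTop,
          c * (N : ℝ) ^ (-(1 / 2 : ℝ)) ≤ sigmaML K f (x N) ∧
            sigmaML K f (x N) ≤ C * (N : ℝ) ^ (-(1 / 2 : ℝ))) := by
  have upper : ∀ N, sigmaML K f (x N) ≤ (N : ℝ) ^ (-(1 / 2 : ℝ)) * ‖F‖ := fun N => by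
    rw [sigmaML_eq_rpow_mul_sqrt_quadForm]
    gcongr
    exact sqrt_quadForm_le_norm hK hKf (hx N) (hxΩ N) hF
  refine ⟨upper, ?_⟩
  rintro ⟨xs, hxsΩ, hfxs, hev⟩
  have hKf_ne : Kf xs ≠ 0 := fun h => hfxs (by rw [← hF xs hxsΩ, h, inner_zero_right])
  have hF_ne : F ≠ 0 := fun h => hfxs (by rw [← hF xs hxsΩ, h, inner_zero_left])
  refine ⟨|f xs| / ‖Kf xs‖, ‖F‖, by positivity, norm_pos_iff.2 hF_ne, ?_⟩
  filter_upwards [hev] with N ⟨j, hj⟩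
  refine ⟨?_, mul_comm ‖F‖ _ ▸ upper N⟩
  rw [sigmaML_eq_rpow_mul_sqrt_quadForm, mul_comm]
  gcongr
  rw [div_le_iff₀' (norm_pos_iff.2 hKf_ne), ← hj]
  exact abs_le_norm_mul_sqrt_quadForm hK hKf (hx N) (hxΩ N) f j

/-- Proposition 3.1 of the paper. Let `K` be a positive-definite kernel
on `Ω` with RKHS `H` (encoded by the feature map `Kf`), and let `(X_N)` be point sets,
`X_N` containing `N` distinct points of `Ω`. If `f ∈ H_K(Ω)` (i.e. `f` is represented on
`Ω` by `F ∈ H`), then `σ_ML(f,X_N) ≤ N^{-1/2} ‖f‖_{H_K(Ω)}` for every `N`; and if there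
is `x* ∈ Ω` with `f(x*) ≠ 0` belonging to `X_N` for all sufficiently large `N`, then
`σ_ML(f,X_N) ≍ N^{-1/2}`. -/
theorem sigmaML_asymp_rkhs {d : ℕ} (Ω : Set (Euc d)) (K : Euc d → Euc d → ℝ)
    (hK : IsPosDefKernel Ω K)
    {H : Type*} [NormedAddCommGroup H] [InnerProductSpace ℝ H] (Kf : Euc d → H)
    (hKf : ∀ x ∈ Ω, ∀ y ∈ Ω, ⟪Kf x, Kf y⟫ = K x y)
    (hsep : ∀ g : H, (∀ t ∈ Ω, ⟪g, Kf t⟫ = 0) → g = 0)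
    (x : (N : ℕ) → Fin N → Euc d)
    (hx : ∀ N, Function.Injective (x N)) (hxΩ : ∀ N i, x N i ∈ Ω)
    (f : Euc d → ℝ) (F : H) (hF : ∀ t ∈ Ω, ⟪F, Kf t⟫ = f t) :
    (∀ N : ℕ, sigmaML K f (x N) ≤ (N : ℝ) ^ (-(1 / 2 : ℝ)) * ‖F‖) ∧
      ((∃ xstar ∈ Ω, f xstar ≠ 0 ∧ ∀ᶠ N : ℕ in atTop, ∃ i, x N i = xstar) →
        ∃ c C : ℝ, 0 < c ∧ 0 < C ∧ ∀ᶠ N : ℕ in atTop,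
          c * (N : ℝ) ^ (-(1 / 2 : ℝ)) ≤ sigmaML K f (x N) ∧
            sigmaML K f (x N) ≤ C * (N : ℝ) ^ (-(1 / 2 : ℝ))) :=
  sigmaML_asymp_rkhs_general Ω K hK Kf hKf x hx hxΩ f F hF
end

section
/- Let K(x,y) = min{x,y} be the Brownian motion kernel on Ω = [0,1], let w ≡ 1, and let X_N = {1/N, 2/N, …, 1} be the equispaced points x_n = n/N, n = 1,…,N. Then the Bayesian quadrature integral variance equals V_{X_N} = ∫₀¹ ∫₀¹ P_{X_N}(x,y) dx dy = 1/(12 N²). -/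
open MeasureTheory Filter Matrix Real Function
open scoped BigOperators Topology

noncomputable section

/-- The kernel matrix `(K_X)_{ij} = K(x_i, x_j)` for a kernel on `ℝ`. -/
def kernelMatrix1 (K : ℝ → ℝ → ℝ) {N : ℕ} (x : Fin N → ℝ) : Matrix (Fin N) (Fin N) ℝ :=
  Matrix.of fun i j => K (x i) (x j)

/-- The vector `(k_X(t))_i = K(t, x_i)`. -/
def kvec1 (K : ℝ → ℝ → ℝ) {N : ℕ} (x : Fin N → ℝ) (t : ℝ) : Fin N → ℝ :=
  fun i => K t (x i)

/-- The data vector `(f_X)_i = f(x_i)`. -/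
def fvec1 (f : ℝ → ℝ) {N : ℕ} (x : Fin N → ℝ) : Fin N → ℝ := fun i => f (x i)

/-- The GP conditional mean `s_{f,X}(t) = k_X(t)ᵀ K_X⁻¹ f_X`. -/
def condMean1 (K : ℝ → ℝ → ℝ) {N : ℕ} (x : Fin N → ℝ) (f : ℝ → ℝ) (t : ℝ) : ℝ :=
  kvec1 K x t ⬝ᵥ ((kernelMatrix1 K x)⁻¹ *ᵥ fvec1 f x)

/-- The GP conditional covariance `P_X(s,t) = K(s,t) - k_X(s)ᵀ K_X⁻¹ k_X(t)`. -/
def condCov1 (K : ℝ → ℝ → ℝ) {N : ℕ} (x : Fin N → ℝ) (s t : ℝ) : ℝ :=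
  K s t - kvec1 K x s ⬝ᵥ ((kernelMatrix1 K x)⁻¹ *ᵥ kvec1 K x t)

/-- The quadratic form `f_Xᵀ K_X⁻¹ f_X`. -/
def quadForm1 (K : ℝ → ℝ → ℝ) (f : ℝ → ℝ) {N : ℕ} (x : Fin N → ℝ) : ℝ :=
  fvec1 f x ⬝ᵥ ((kernelMatrix1 K x)⁻¹ *ᵥ fvec1 f x)

/-- The maximum likelihood estimate `σ_ML(f,X) = √(f_Xᵀ K_X⁻¹ f_X / N)`. -/
def sigmaML1 (K : ℝ → ℝ → ℝ) (f : ℝ → ℝ) {N : ℕ} (x : Fin N → ℝ) : ℝ :=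
  Real.sqrt (quadForm1 K f x / N)

/-- The integral `I(f) = ∫₀¹ f(t) dt` (weight `w ≡ 1`). -/
def intF1 (f : ℝ → ℝ) : ℝ := ∫ t in Set.Icc (0 : ℝ) 1, f t

/-- The Bayesian quadrature estimate `Q_X(f) = ∫₀¹ s_{f,X}(t) dt` (weight `w ≡ 1`). -/
def quadQ1 (K : ℝ → ℝ → ℝ) {N : ℕ} (x : Fin N → ℝ) (f : ℝ → ℝ) : ℝ :=
  ∫ t in Set.Icc (0 : ℝ) 1, condMean1 K x f t

/-- The Bayesian quadrature variance `V_X = ∫₀¹ ∫₀¹ P_X(s,t) ds dt` (weight `w ≡ 1`). -/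
def quadV1 (K : ℝ → ℝ → ℝ) {N : ℕ} (x : Fin N → ℝ) : ℝ :=
  ∫ s in Set.Icc (0 : ℝ) 1, ∫ t in Set.Icc (0 : ℝ) 1, condCov1 K x s t

/-- Credible-interval width `R_BC(f,X) = σ_ML(f,X) V_X^{1/2}`. -/
def RBC1 (K : ℝ → ℝ → ℝ) (f : ℝ → ℝ) {N : ℕ} (x : Fin N → ℝ) : ℝ :=
  sigmaML1 K f x * Real.sqrt (quadV1 K x)

/-- Standard score `|err|/R`, with the convention that it equals `1` when `R = 0`. -/
def score1 (err R : ℝ) : ℝ := if R = 0 then 1 else |err| / R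

/-- The Brownian motion kernel `K(s,t) = min{s,t}` on `[0,1]`. -/
def bmK : ℝ → ℝ → ℝ := fun s t => min s t

/-- The equispaced points `x_n = n/N`, `n = 1, …, N`. -/
def eqPts (N : ℕ) : Fin N → ℝ := fun i => ((i : ℕ) + 1 : ℝ) / N

end
noncomputable section

/-!
Conditioning on `X` subtracts `zᵀ K_X⁻¹ z` from `∫∫ K = 1/3`, where `z_i = ∫₀¹ min(t, x_i) dt =
x_i - x_i²/2` is the kernel mean. For the equispaced grid, `K_X⁻¹ z` is the vector of trapezoidal
weights `(1/N, …, 1/N, 1/(2N))`: the trapezoidal rule on `0, x_1, …, x_N` is exact for the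
piecewise linear functions `t ↦ min(t, x_i)`, which vanish at `0`. Hence `zᵀ K_X⁻¹ z` is the
trapezoidal approximation of `∫₀¹ (s - s²/2) ds = 1/3`, and for this quadratic the trapezoidal rule
errs by exactly `h²/12 = 1/(12 N²)`.
-/

open Finset Matrix MeasureTheory

lemma integral_dotProduct_const {α ι : Type*} [MeasurableSpace α] {μ : Measure α} [Fintype ι]
    {v : α → ι → ℝ} (hv : ∀ i, Integrable (fun a => v a i) μ) (w : ι → ℝ) :
    ∫ a, v a ⬝ᵥ w ∂μ = (fun i => ∫ a, v a i ∂μ) ⬝ᵥ w := by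
  simp only [dotProduct]
  rw [integral_finsetSum _ fun i _ => (hv i).mul_const (w i)]
  simp only [integral_mul_const]

def kernelMean1 (K : ℝ → ℝ → ℝ) {N : ℕ} (x : Fin N → ℝ) : Fin N → ℝ :=
  fun i => ∫ t in Set.Icc (0 : ℝ) 1, K t (x i)

theorem quadV1_eq_sub_kernelMean1 {K : ℝ → ℝ → ℝ} (hK : Continuous (Function.uncurry K))
    {N : ℕ} (x : Fin N → ℝ) :
    quadV1 K x = (∫ s in Set.Icc (0 : ℝ) 1, ∫ t in Set.Icc (0 : ℝ) 1, K s t)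
      - kernelMean1 K x ⬝ᵥ ((kernelMatrix1 K x)⁻¹ *ᵥ kernelMean1 K x) := by
  set A := (kernelMatrix1 K x)⁻¹
  have hK_right : ∀ s, Continuous (K s) := fun s => hK.comp (Continuous.prodMk_right s)
  have hkvec : Continuous (kvec1 K x) :=
    continuous_pi fun i => hK.comp (continuous_id.prodMk continuous_const)
  have hkvec_int : ∀ i, IntegrableOn (fun t => kvec1 K x t i) (Set.Icc 0 1) :=
    fun i => ((continuous_apply i).comp hkvec).integrableOn_Icc
  have inner (s : ℝ) : ∫ t in Set.Icc (0 : ℝ) 1, condCov1 K x s t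
      = (∫ t in Set.Icc (0 : ℝ) 1, K s t) - kvec1 K x s ⬝ᵥ (A *ᵥ kernelMean1 K x) := by
    simp_rw [condCov1, dotProduct_mulVec, dotProduct_comm _ (kvec1 K x _)]
    rw [integral_sub (hK_right s).integrableOn_Icc
      (hkvec.dotProduct continuous_const).integrableOn_Icc, integral_dotProduct_const hkvec_int,
      dotProduct_comm]
    rfl
  rw [quadV1, setIntegral_congr_fun measurableSet_Icc fun s _ => inner s,
    integral_sub (continuous_parametric_integral_of_continuous hK isCompact_Icc).integrableOn_Icc
      (hkvec.dotProduct continuous_const).integrableOn_Icc, integral_dotProduct_const hkvec_int]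
  rfl

lemma sum_range_cast_add_one (n : ℕ) : ∑ j ∈ range n, ((j : ℝ) + 1) = n * (n + 1) / 2 := by
  induction n with
  | zero => simp
  | succ n ih => rw [sum_range_succ, ih]; push_cast; ring

lemma sum_range_sq_cast_add_one (n : ℕ) :
    ∑ j ∈ range n, ((j : ℝ) + 1) ^ 2 = (n : ℝ) * (n + 1) * (2 * n + 1) / 6 := by
  induction n with
  | zero => simp
  | succ n ih => rw [sum_range_succ, ih]; push_cast; ring

lemma sum_range_min_cast_add_one (m k : ℕ) :
    ∑ j ∈ range (m + k), min (m : ℝ) (j + 1) = m * (m + 1) / 2 + m * k := by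
  have below : ∀ j ∈ range m, min (m : ℝ) (j + 1) = j + 1 := fun j hj =>
    min_eq_right (by exact_mod_cast mem_range.mp hj)
  have above : ∀ j ∈ range k, min (m : ℝ) ((m + j : ℕ) + 1) = m := fun j _ =>
    min_eq_left (by push_cast; linarith [(j.cast_nonneg : (0 : ℝ) ≤ j)])
  rw [sum_range_add, sum_congr rfl below, sum_congr rfl above, sum_range_cast_add_one, sum_const,
    card_range, nsmul_eq_mul]
  ring

lemma continuous_bmK : Continuous (Function.uncurry bmK) := continuous_fst.min continuous_snd

lemma integral_Icc_min_const {a : ℝ} (ha : a ∈ Set.Icc (0 : ℝ) 1) :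
    ∫ t in Set.Icc (0 : ℝ) 1, min t a = a - a ^ 2 / 2 := by
  obtain ⟨ha₀, ha₁⟩ := ha
  have hint : ∀ b c : ℝ, IntervalIntegrable (fun t => min t a) volume b c :=
    fun b c => (continuous_id.min continuous_const).intervalIntegrable b c
  rw [integral_Icc_eq_integral_Ioc, ← intervalIntegral.integral_of_le zero_le_one,
    ← intervalIntegral.integral_add_adjacent_intervals (hint 0 a) (hint a 1),
    intervalIntegral.integral_congr (f := fun t => min t a) (g := fun t => t) fun t ht =>
      min_eq_left (Set.uIcc_of_le ha₀ ▸ ht).2,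
    intervalIntegral.integral_congr (f := fun t => min t a) (g := fun _ => a) fun t ht =>
      min_eq_right (Set.uIcc_of_le ha₁ ▸ ht).1]
  simp only [integral_id, intervalIntegral.integral_const, smul_eq_mul]
  ring

lemma eqPts_mem_Icc {N : ℕ} (i : Fin N) : eqPts N i ∈ Set.Icc (0 : ℝ) 1 := by
  have hN : (0 : ℝ) < N := by exact_mod_cast i.pos
  refine ⟨by unfold eqPts; positivity, ?_⟩
  rw [eqPts, div_le_one hN]
  exact_mod_cast i.isLt

lemma kernelMean1_bmK_eqPts (N : ℕ) :
    kernelMean1 bmK (eqPts N) = fun i => eqPts N i - eqPts N i ^ 2 / 2 :=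
  funext fun i => integral_Icc_min_const (eqPts_mem_Icc i)

lemma integral_integral_bmK :
    ∫ s in Set.Icc (0 : ℝ) 1, ∫ t in Set.Icc (0 : ℝ) 1, bmK s t = 1 / 3 := by
  rw [setIntegral_congr_fun measurableSet_Icc fun s hs => by
      simp only [bmK, min_comm s]; exact integral_Icc_min_const hs,
    integral_Icc_eq_integral_Ioc, ← intervalIntegral.integral_of_le zero_le_one,
    intervalIntegral.integral_sub (f := fun s => s) (continuous_id.intervalIntegrable 0 1)
      (((continuous_pow 2).div_const 2).intervalIntegrable 0 1),
    intervalIntegral.integral_div, integral_id, integral_pow]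
  norm_num

def lowerOnes (N : ℕ) : Matrix (Fin N) (Fin N) ℝ := of fun i j => if j ≤ i then 1 else 0

lemma det_lowerOnes (N : ℕ) : (lowerOnes N).det = 1 := by
  rw [det_of_isLowerTriangular (lowerOnes N) fun i j (h : i < j) => if_neg h.not_ge]
  simp [lowerOnes]

lemma kernelMatrix1_bmK_eqPts_apply {N : ℕ} (i j : Fin N) :
    kernelMatrix1 bmK (eqPts N) i j = min ((i : ℝ) + 1) ((j : ℝ) + 1) / N :=
  min_div_div_right N.cast_nonneg _ _

lemma kernelMatrix1_bmK_eqPts (N : ℕ) :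
    kernelMatrix1 bmK (eqPts N) = (N : ℝ)⁻¹ • (lowerOnes N * (lowerOnes N)ᵀ) := by
  ext i j
  have hcount : ∑ k, lowerOnes N i k * lowerOnes N j k = min ((i : ℝ) + 1) ((j : ℝ) + 1) := by
    simp only [lowerOnes, of_apply, boole_mul, ← ite_and, ← le_min_iff]
    rw [sum_boole, filter_ge_eq_Iic, Fin.card_Iic, Fin.coe_min]
    push_cast
    exact (min_add_add_right _ _ 1).symm
  rw [kernelMatrix1_bmK_eqPts_apply, Matrix.smul_apply, mul_apply, smul_eq_mul, div_eq_inv_mul]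
  simp only [transpose_apply, hcount]

lemma isUnit_det_kernelMatrix1_bmK_eqPts (N : ℕ) : IsUnit (kernelMatrix1 bmK (eqPts N)).det := by
  rcases N.eq_zero_or_pos with rfl | hN
  · simp
  rw [kernelMatrix1_bmK_eqPts, det_smul, det_mul, det_transpose, det_lowerOnes]
  simp [hN.ne']

def trapezoidWeights (N : ℕ) : Fin N → ℝ :=
  fun j => if (j : ℕ) + 1 = N then 1 / (2 * N) else 1 / N

lemma sum_mul_trapezoidWeights (M : ℕ) (f : ℕ → ℝ) :
    ∑ j : Fin (M + 1), f j * trapezoidWeights (M + 1) j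
      = (∑ j ∈ range (M + 1), f j) / (M + 1) - f M / (2 * (M + 1)) := by
  simp only [trapezoidWeights]
  rw [Fin.sum_univ_eq_sum_range (fun j => f j * if j + 1 = M + 1 then 1 / (2 * ((M + 1 : ℕ) : ℝ))
      else 1 / ((M + 1 : ℕ) : ℝ)), sum_range_succ, sum_range_succ, if_pos rfl,
    sum_congr rfl fun j hj => by rw [if_neg (by simp at hj; omega)], ← sum_mul]
  push_cast
  field_simp
  ring

lemma kernelMatrix1_bmK_mulVec_trapezoidWeights (N : ℕ) :
    kernelMatrix1 bmK (eqPts N) *ᵥ trapezoidWeights N = kernelMean1 bmK (eqPts N) := by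
  ext i
  obtain ⟨M, rfl⟩ := Nat.exists_eq_add_one_of_ne_zero i.pos.ne'
  obtain ⟨k, hk⟩ : ∃ k, M + 1 = ((i : ℕ) + 1) + k := ⟨M - i, by omega⟩
  have hrow := sum_range_min_cast_add_one ((i : ℕ) + 1) k
  rw [← hk] at hrow
  push_cast at hrow
  rw [mulVec, dotProduct]
  simp only [kernelMatrix1_bmK_eqPts_apply]
  rw [sum_mul_trapezoidWeights M fun j => min ((i : ℝ) + 1) (j + 1) / ((M + 1 : ℕ) : ℝ),
    ← sum_div, hrow, min_eq_left (by exact_mod_cast i.isLt : (i : ℝ) + 1 ≤ M + 1),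
    kernelMean1_bmK_eqPts]
  simp only [eqPts]
  have hkR : (M : ℝ) + 1 = (i : ℝ) + 1 + k := by exact_mod_cast hk
  push_cast
  rw [hkR]
  field_simp
  ring

lemma kernelMean1_bmK_dotProduct_trapezoidWeights {N : ℕ} (hN : 0 < N) :
    kernelMean1 bmK (eqPts N) ⬝ᵥ trapezoidWeights N = 1 / 3 - 1 / (12 * (N : ℝ) ^ 2) := by
  obtain ⟨M, rfl⟩ := Nat.exists_eq_add_one_of_ne_zero hN.ne'
  rw [kernelMean1_bmK_eqPts, dotProduct]
  simp only [eqPts]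
  rw [sum_mul_trapezoidWeights M fun j =>
      ((j : ℝ) + 1) / ((M + 1 : ℕ) : ℝ) - (((j : ℝ) + 1) / ((M + 1 : ℕ) : ℝ)) ^ 2 / 2,
    sum_sub_distrib, ← sum_div, ← sum_div]
  simp only [div_pow]
  rw [← sum_div, sum_range_cast_add_one, sum_range_sq_cast_add_one]
  push_cast
  field_simp
  ring

/-- For the Brownian motion kernel `K(s,t) = min{s,t}` on `[0,1]`,
weight `w ≡ 1`, and the equispaced points `X_N = {1/N, …, 1}`, the Bayesian quadrature
integral variance is `V_{X_N} = ∫₀¹ ∫₀¹ P_{X_N}(s,t) ds dt = 1/(12 N²)`. -/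
theorem brownian_quadV_eq (N : ℕ) (hN : 0 < N) :
    quadV1 bmK (eqPts N) = 1 / (12 * (N : ℝ) ^ 2) := by
  have hsolve :
      (kernelMatrix1 bmK (eqPts N))⁻¹ *ᵥ kernelMean1 bmK (eqPts N) = trapezoidWeights N := by
    rw [← kernelMatrix1_bmK_mulVec_trapezoidWeights, mulVec_mulVec,
      nonsing_inv_mul _ (isUnit_det_kernelMatrix1_bmK_eqPts N), one_mulVec]
  rw [quadV1_eq_sub_kernelMean1 continuous_bmK, integral_integral_bmK, hsolve,
    kernelMean1_bmK_dotProduct_trapezoidWeights hN]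
  ring

end
end
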